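/- No (λ_S+1) cut subdivides more than one (λ_S+1) class: if C is a (λ_S+1) cut and W1, W2 are distinct (λ_S+1) classes, then C does not subdivide both W1 and W2. -/
import Mathlib


open Finset

namespace Paper

variable {α : Type*} [Fintype α] [DecidableEq α]

/-- Capacity of a cut `A` in an undirected multigraph with edge multiplicities `w`. -/
def cutCap (w : α → α → ℕ) (A : Finset α) : ℕ := ∑ u ∈ A, ∑ v ∈ Aᶜ, w u v

/-- `C` is a Steiner cut for the Steiner set `S`. -/
def IsSteinerCut (S C : Finset α) : Prop := (C ∩ S).Nonempty ∧ (S \ C).Nonempty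

/-- `C` is an `S`-mincut: a Steiner cut of capacity `lam = λ_S`. -/
def IsSMincut (w : α → α → ℕ) (S : Finset α) (lam : ℕ) (C : Finset α) : Prop :=
  IsSteinerCut S C ∧ cutCap w C = lam

/-- `C` is a `(λ_S+1)` cut: a Steiner cut of capacity `lam + 1`. -/
def IsPlusOneCut (w : α → α → ℕ) (S : Finset α) (lam : ℕ) (C : Finset α) : Prop :=
  IsSteinerCut S C ∧ cutCap w C = lam + 1

/-- A cut `C` separates `u` and `v`: exactly one of them lies in `C`. -/
def Separates (C : Finset α) (u v : α) : Prop := (u ∈ C ∧ v ∉ C) ∨ (v ∈ C ∧ u ∉ C)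

/-- `W` is a `(λ_S+1)` class: an equivalence class of the relation relating `u,v`
iff no `S`-mincut separates them. -/
def IsClass (w : α → α → ℕ) (S : Finset α) (lam : ℕ) (W : Finset α) : Prop :=
  ∃ u0 : α, ∀ v : α, v ∈ W ↔ ∀ C : Finset α, IsSMincut w S lam C → ¬ Separates C u0 v

/-- `C` is a nearest `(λ_S+1)` cut of `u` containing the Steiner vertex `s`. -/
def IsNearestPlusOneCut (w : α → α → ℕ) (S : Finset α) (lam : ℕ) (s u : α)
    (C : Finset α) : Prop :=
  IsPlusOneCut w S lam C ∧ s ∈ C ∧ u ∈ C ∧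
    ∀ C' : Finset α, IsPlusOneCut w S lam C' → s ∈ C' → u ∈ C' → ¬ C' ⊂ C

/-- A cut `C` subdivides a set `X`. -/
def Subdivides (C X : Finset α) : Prop := (X ∩ C).Nonempty ∧ (X \ C).Nonempty
lemma cutCap_eq (w : α → α → ℕ) (A : Finset α) :
    cutCap w A = ∑ u : α, ∑ v : α, if u ∈ A ∧ v ∉ A then w u v else 0 := by
  unfold cutCap
  rw [← Finset.sum_filter_add_sum_filter_not univ (· ∈ A)
    (fun u => ∑ v : α, if u ∈ A ∧ v ∉ A then w u v else 0)]
  have h1 : ∀ u ∈ univ.filter (· ∈ A),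
      (∑ v : α, if u ∈ A ∧ v ∉ A then w u v else 0) = ∑ v ∈ Aᶜ, w u v := by
    intro u hu
    simp only [mem_filter] at hu
    rw [← Finset.sum_filter]
    apply Finset.sum_congr
    · ext v; simp [hu.2]
    · intros; rfl
  have h2 : ∀ u ∈ univ.filter (¬ · ∈ A),
      (∑ v : α, if u ∈ A ∧ v ∉ A then w u v else 0) = 0 := by
    intro u hu
    simp only [mem_filter] at hu
    simp [hu.2]
  rw [Finset.sum_congr rfl h1, Finset.sum_congr rfl h2, Finset.sum_const_zero, add_zero]
  apply Finset.sum_congr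
  · ext u; simp
  · intros; rfl

lemma cutCap_submod (w : α → α → ℕ) (A B : Finset α) :
    cutCap w (A ∩ B) + cutCap w (A ∪ B) ≤ cutCap w A + cutCap w B := by
  simp only [cutCap_eq]
  rw [← Finset.sum_add_distrib, ← Finset.sum_add_distrib]
  refine Finset.sum_le_sum fun u _ => ?_
  rw [← Finset.sum_add_distrib, ← Finset.sum_add_distrib]
  refine Finset.sum_le_sum fun v _ => ?_
  by_cases h1 : u ∈ A <;> by_cases h2 : u ∈ B <;> by_cases h3 : v ∈ A <;> by_cases h4 : v ∈ B <;>
    simp [h1, h2, h3, h4]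

lemma cutCap_compl (w : α → α → ℕ) (hsym : ∀ u v, w u v = w v u) (A : Finset α) :
    cutCap w Aᶜ = cutCap w A := by
  simp only [cutCap_eq]
  rw [Finset.sum_comm]
  refine Finset.sum_congr rfl fun u _ => Finset.sum_congr rfl fun v _ => ?_
  by_cases h1 : u ∈ A <;> by_cases h2 : v ∈ A <;> simp [h1, h2, hsym u v]

/-- No (λ_S+1) cut subdivides more than one (λ_S+1) class. -/
theorem plusOneCut_subdivides_at_most_one_class
    (w : α → α → ℕ) (hsym : ∀ u v, w u v = w v u) (hdiag : ∀ u, w u u = 0)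
    (S : Finset α) (hScard : 2 ≤ S.card) (lam : ℕ)
    (hlam_ex : ∃ C : Finset α, IsSteinerCut S C ∧ cutCap w C = lam)
    (hlam_min : ∀ C : Finset α, IsSteinerCut S C → lam ≤ cutCap w C)
    (C : Finset α) (hC : IsPlusOneCut w S lam C)
    (W1 W2 : Finset α) (hW1 : IsClass w S lam W1) (hW2 : IsClass w S lam W2)
    (hne : W1 ≠ W2) :
    ¬ (Subdivides C W1 ∧ Subdivides C W2) := by
  rintro ⟨⟨⟨x1, hx1⟩, ⟨y1, hy1⟩⟩, ⟨⟨x2, hx2⟩, ⟨y2, hy2⟩⟩⟩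
  simp only [mem_inter, mem_sdiff] at hx1 hy1 hx2 hy2
  obtain ⟨u1, hu1⟩ := hW1
  obtain ⟨u2, hu2⟩ := hW2
  -- same-class points lie on the same side of any mincut
  have hside1 : ∀ a ∈ W1, ∀ M : Finset α, IsSMincut w S lam M → (a ∈ M ↔ u1 ∈ M) := by
    intro a ha M hM
    have := (hu1 a).mp ha M hM
    unfold Separates at this; tauto
  have hside2 : ∀ a ∈ W2, ∀ M : Finset α, IsSMincut w S lam M → (a ∈ M ↔ u2 ∈ M) := by
    intro a ha M hM
    have := (hu2 a).mp ha M hM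
    unfold Separates at this; tauto
  -- there is a mincut separating u1 and u2
  have hsep : ∃ D : Finset α, IsSMincut w S lam D ∧ (u1 ∈ D ↔ u2 ∉ D) := by
    by_contra h
    push_neg at h
    apply hne
    ext v
    rw [hu1, hu2]
    constructor <;> intro hv M hM <;> have h1 := hv M hM <;>
      have h2 := h M hM <;> unfold Separates at * <;> tauto
  obtain ⟨D0, hD0, hD0sep⟩ := hsep
  -- normalize so that u1 ∈ D
  have hDex : ∃ D : Finset α, IsSMincut w S lam D ∧ u1 ∈ D ∧ u2 ∉ D := by
    by_cases h : u1 ∈ D0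
    · exact ⟨D0, hD0, h, hD0sep.mp h⟩
    · refine ⟨D0ᶜ, ⟨⟨?_, ?_⟩, ?_⟩, by simpa using h, by simp [hD0sep.not_left.mp h]⟩
      · obtain ⟨t, ht⟩ := hD0.1.2
        exact ⟨t, by simp only [mem_sdiff] at ht; simp [ht.1, ht.2, mem_inter]⟩
      · obtain ⟨s, hs⟩ := hD0.1.1
        exact ⟨s, by simp only [mem_inter] at hs; simp [hs.1, hs.2, mem_sdiff]⟩
      · rw [cutCap_compl w hsym]; exact hD0.2
  obtain ⟨D, hD, hu1D, hu2D⟩ := hDex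
  -- locate the four points
  have hx1D : x1 ∈ D := (hside1 x1 hx1.1 D hD).mpr hu1D
  have hy1D : y1 ∈ D := (hside1 y1 hy1.1 D hD).mpr hu1D
  have hx2D : x2 ∉ D := fun h => hu2D ((hside2 x2 hx2.1 D hD).mp h)
  have hy2D : y2 ∉ D := fun h => hu2D ((hside2 y2 hy2.1 D hD).mp h)
  -- Steiner witnesses
  obtain ⟨p, hp⟩ := hC.1.1
  obtain ⟨q, hq⟩ := hC.1.2
  obtain ⟨r, hr⟩ := hD.1.1
  obtain ⟨t, ht⟩ := hD.1.2
  simp only [mem_inter, mem_sdiff] at hp hq hr ht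
  -- region case analysis: either (C∩D and C∪D are Steiner) or (C\D and D\C are Steiner)
  have hkey : ((∃ a ∈ S, a ∈ C ∧ a ∈ D) ∧ (∃ b ∈ S, b ∉ C ∧ b ∉ D)) ∨
      ((∃ a ∈ S, a ∈ C ∧ a ∉ D) ∧ (∃ b ∈ S, b ∉ C ∧ b ∈ D)) := by
    by_cases hpD : p ∈ D
    · by_cases hqD : q ∈ D
      · by_cases htC : t ∈ C
        · exact Or.inr ⟨⟨t, ht.1, htC, ht.2⟩, ⟨q, hq.1, hq.2, hqD⟩⟩
        · exact Or.inl ⟨⟨p, hp.2, hp.1, hpD⟩, ⟨t, ht.1, htC, ht.2⟩⟩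
      · exact Or.inl ⟨⟨p, hp.2, hp.1, hpD⟩, ⟨q, hq.1, hq.2, hqD⟩⟩
    · by_cases hqD : q ∈ D
      · exact Or.inr ⟨⟨p, hp.2, hp.1, hpD⟩, ⟨q, hq.1, hq.2, hqD⟩⟩
      · by_cases hrC : r ∈ C
        · exact Or.inl ⟨⟨r, hr.2, hrC, hr.1⟩, ⟨q, hq.1, hq.2, hqD⟩⟩
        · exact Or.inr ⟨⟨p, hp.2, hp.1, hpD⟩, ⟨r, hr.2, hrC, hr.1⟩⟩
  rcases hkey with ⟨⟨a, haS, haC, haD⟩, ⟨b, hbS, hbC, hbD⟩⟩ | ⟨⟨a, haS, haC, haD⟩, ⟨b, hbS, hbC, hbD⟩⟩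
  · -- Case A : C ∩ D and C ∪ D are Steiner cuts
    have hst1 : IsSteinerCut S (C ∩ D) :=
      ⟨⟨a, by simp [haS, haC, haD]⟩, ⟨b, by simp [hbS, hbC]⟩⟩
    have hst2 : IsSteinerCut S (C ∪ D) :=
      ⟨⟨a, by simp [haS, haC]⟩, ⟨b, by simp [hbS, hbC, hbD]⟩⟩
    have h1 := hlam_min _ hst1
    have h2 := hlam_min _ hst2
    have hsub := cutCap_submod w C D
    rw [hC.2, hD.2] at hsub
    have : cutCap w (C ∩ D) = lam ∨ cutCap w (C ∪ D) = lam := by omega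
    rcases this with h | h
    · -- C ∩ D is a mincut separating x1 and y1
      have hM : IsSMincut w S lam (C ∩ D) := ⟨hst1, h⟩
      have := (hside1 x1 hx1.1 _ hM).trans (hside1 y1 hy1.1 _ hM).symm
      simp [mem_inter, hx1.2, hy1.2, hx1D] at this
    · have hM : IsSMincut w S lam (C ∪ D) := ⟨hst2, h⟩
      have := (hside2 x2 hx2.1 _ hM).trans (hside2 y2 hy2.1 _ hM).symm
      simp [mem_union, hx2.2, hy2.2, hy2D] at this
  · -- Case B : C \ D and D \ C are Steiner cuts
    have hst1 : IsSteinerCut S (C \ D) :=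
      ⟨⟨a, by simp [haS, haC, haD, mem_sdiff]⟩, ⟨b, by simp [hbS, hbC, mem_sdiff]⟩⟩
    have hst2 : IsSteinerCut S (D \ C) :=
      ⟨⟨b, by simp [hbS, hbC, hbD, mem_sdiff]⟩, ⟨a, by simp [haS, haC, mem_sdiff]⟩⟩
    have h1 := hlam_min _ hst1
    have h2 := hlam_min _ hst2
    have hsub := cutCap_submod w C Dᶜ
    rw [hC.2, cutCap_compl w hsym D, hD.2] at hsub
    have he1 : C ∩ Dᶜ = C \ D := by ext z; simp [mem_sdiff]
    have he2 : cutCap w (C ∪ Dᶜ) = cutCap w (D \ C) := by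
      rw [← cutCap_compl w hsym (C ∪ Dᶜ)]
      congr 1
      ext z; simp [mem_sdiff, and_comm]
    rw [he1, he2] at hsub
    have : cutCap w (C \ D) = lam ∨ cutCap w (D \ C) = lam := by omega
    rcases this with h | h
    · have hM : IsSMincut w S lam (C \ D) := ⟨hst1, h⟩
      have := (hside2 x2 hx2.1 _ hM).trans (hside2 y2 hy2.1 _ hM).symm
      simp [mem_sdiff, hx2.2, hy2.2, hx2D] at this
    · have hM : IsSMincut w S lam (D \ C) := ⟨hst2, h⟩
      have := (hside1 x1 hx1.1 _ hM).trans (hside1 y1 hy1.1 _ hM).symm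
      simp [mem_sdiff, hx1.2, hy1.2, hy1D] at this

end Paper
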